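/- Suppose in addition to the setting of the coarse descent lemma that the nonsmooth coherence condition holds: I_h^H ∂G(x) ⊆ ∂G_H(ζ⁰), where I_h^H ∈ L(X; X_H) with adjoint (I_h^H)* = μ I_H^h for μ > 0. Let F : X → ℝ be convex differentiable and set d := I_H^h(ζ^m − ζ⁰), where ζ^m is produced by m coarse forward-backward steps with w := I_h^H ∇F(x) − ∇F_H(ζ⁰). Then sup_{g ∈ ∂G(x)} ⟨g + ∇F(x), d⟩ ≤ −(ε/(2μτ_H)) Σ_{j=0}^{m−1} ‖ζ^{j+1} − ζ^j‖² ≤ 0. -/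

import Mathlib

/-!
The coarse iterates are forward-backward steps for the tilted coarse objective
`Ψ = FH + ⟪w, ·⟫ + GH`. By the three-point property of the prox and the descent lemma for the
`LH`-smooth `FH`, each step decreases `Ψ` by `(2 - τH LH) / (2 τH) ‖ζ (j+1) - ζ j‖²`, so
`Ψ (ζ m) + (2 - τH LH) / (2 τH) Σⱼ ‖ζ (j+1) - ζ j‖² ≤ Ψ (ζ 0)`.
For `g ∈ ∂G x`, convexity of `FH` and coherence make `fH (ζ 0) + w + Ih g = Ih (g + f x)` a
subgradient of `Ψ` at `ζ 0`, hence `Ψ (ζ m) - Ψ (ζ 0) ≥ ⟪Ih (g + f x), ζ m - ζ 0⟫ = μ ⟪g + f x, d⟫`.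
-/

open RealInnerProductSpace

/-- `G` is proper, convex and lower semicontinuous as an extended-real-valued function. -/
def ProperConvexLsc {X : Type*} [NormedAddCommGroup X] [InnerProductSpace ℝ X]
    (G : X → EReal) : Prop :=
  (∃ x, G x ≠ ⊤) ∧ (∀ x, G x ≠ ⊥) ∧
  (∀ x y : X, ∀ a b : ℝ, 0 ≤ a → 0 ≤ b → a + b = 1 →
    G (a • x + b • y) ≤ (a : EReal) * G x + (b : EReal) * G y) ∧
  LowerSemicontinuous G

/-- `p` is the proximal point `prox_{τG}(x)`. -/
def IsProx {X : Type*} [NormedAddCommGroup X] [InnerProductSpace ℝ X]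
    (τ : ℝ) (G : X → EReal) (x p : X) : Prop :=
  ∀ z : X, G p + ((‖p - x‖ ^ 2 / (2 * τ) : ℝ) : EReal)
    ≤ G z + ((‖z - x‖ ^ 2 / (2 * τ) : ℝ) : EReal)

/-- The (convex) subdifferential of an extended-real-valued function. -/
def ESubdiff {X : Type*} [NormedAddCommGroup X] [InnerProductSpace ℝ X]
    (G : X → EReal) (x : X) : Set X :=
  {g : X | ∀ y : X, G x + ((⟪g, y - x⟫ : ℝ) : EReal) ≤ G y}

def EConvex {E : Type*} [NormedAddCommGroup E] [InnerProductSpace ℝ E] (G : E → EReal) : Prop :=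
  ∀ x y : E, ∀ a b : ℝ, 0 ≤ a → 0 ≤ b → a + b = 1 →
    G (a • x + b • y) ≤ (a : EReal) * G x + (b : EReal) * G y

section Smooth

variable {E : Type*} [NormedAddCommGroup E] [InnerProductSpace ℝ E] [CompleteSpace E]
  {F : E → ℝ}

lemma HasGradientAt.hasDerivAt_comp_add_smul {g q v : E} {t : ℝ}
    (hF : HasGradientAt F g (q + t • v)) :
    HasDerivAt (fun s : ℝ => F (q + s • v)) ⟪g, v⟫ t := by
  have hline : HasDerivAt (fun s : ℝ => q + s • v) v t := by
    simpa using ((hasDerivAt_id t).smul_const v).const_add q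
  have h := hF.hasFDerivAt.comp_hasDerivAt t hline
  simp only [InnerProductSpace.toDual_apply_apply] at h
  exact h

lemma HasGradientAt.add_inner_const {g x : E} (hF : HasGradientAt F g x) (w : E) :
    HasGradientAt (fun y => F y + ⟪w, y⟫) (g + w) x := by
  rw [hasGradientAt_iff_hasFDerivAt, map_add]
  exact hF.hasFDerivAt.add (InnerProductSpace.toDual ℝ E w).hasFDerivAt

lemma ConvexOn.add_inner_le_of_hasGradientAt (hF : ConvexOn ℝ Set.univ F) {g q : E}
    (hg : HasGradientAt F g q) (p : E) : F q + ⟪g, p - q⟫ ≤ F p := by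
  have hline := hF.comp_affineMap (AffineMap.lineMap q p : ℝ →ᵃ[ℝ] E)
  have hcomp : F ∘ AffineMap.lineMap q p = fun s : ℝ => F (q + s • (p - q)) := by
    funext s
    simp [AffineMap.lineMap_apply, add_comm]
  rw [hcomp, Set.preimage_univ] at hline
  have hslope := hline.le_slope_of_hasDerivAt (Set.mem_univ 0) (Set.mem_univ 1) one_pos
    (HasGradientAt.hasDerivAt_comp_add_smul (by simpa using hg))
  simp only [slope_def_field, one_smul, add_sub_cancel, zero_smul, add_zero, sub_zero, div_one]
    at hslope
  linarith

lemma le_add_inner_add_sq_of_lipschitz_gradient {f : E → E} {L : ℝ}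
    (hF : ∀ y, HasGradientAt F (f y) y) (hf : ∀ y y', ‖f y - f y'‖ ≤ L * ‖y - y'‖) (q p : E) :
    F p ≤ F q + ⟪f q, p - q⟫ + L / 2 * ‖p - q‖ ^ 2 := by
  set v := p - q
  set ψ : ℝ → ℝ := fun s => F (q + s • v) - s * ⟪f q, v⟫ - L / 2 * s ^ 2 * ‖v‖ ^ 2
  have hψ : ∀ s, HasDerivAt ψ (⟪f (q + s • v), v⟫ - ⟪f q, v⟫ - L * s * ‖v‖ ^ 2) s := by
    intro s
    have h := (((hF (q + s • v)).hasDerivAt_comp_add_smul).sub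
      ((hasDerivAt_id s).mul_const ⟪f q, v⟫)).sub
      (((hasDerivAt_pow 2 s).const_mul (L / 2)).mul_const (‖v‖ ^ 2))
    exact h.congr_deriv (by simp only [Nat.cast_ofNat, Nat.add_one_sub_one, pow_one]; ring)
  have hanti : AntitoneOn ψ (Set.Icc 0 1) := by
    refine antitoneOn_of_hasDerivWithinAt_nonpos (convex_Icc 0 1)
      (fun s _ => (hψ s).continuousAt.continuousWithinAt) (fun s _ => (hψ s).hasDerivWithinAt)
      fun s hs => ?_
    rw [interior_Icc] at hs
    have hnorm : ‖q + s • v - q‖ = s * ‖v‖ := by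
      rw [add_sub_cancel_left, norm_smul, Real.norm_of_nonneg hs.1.le]
    calc ⟪f (q + s • v), v⟫ - ⟪f q, v⟫ - L * s * ‖v‖ ^ 2
        = ⟪f (q + s • v) - f q, v⟫ - L * s * ‖v‖ ^ 2 := by rw [inner_sub_left]
      _ ≤ ‖f (q + s • v) - f q‖ * ‖v‖ - L * s * ‖v‖ ^ 2 := by
        gcongr; exact real_inner_le_norm _ _
      _ ≤ L * ‖q + s • v - q‖ * ‖v‖ - L * s * ‖v‖ ^ 2 := by
        gcongr; exact hf _ _
      _ = 0 := by rw [hnorm]; ring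
  have h01 := hanti (by simp) (by simp) zero_le_one
  simp only [ψ, v, one_smul, add_sub_cancel, one_mul, one_pow, mul_one, zero_smul, add_zero,
    zero_mul, sub_zero, ne_eq, OfNat.ofNat_ne_zero, not_false_eq_true, zero_pow, mul_zero] at h01
  linarith

end Smooth

section Prox

variable {E : Type*} [NormedAddCommGroup E] [InnerProductSpace ℝ E] {τ : ℝ} {G : E → EReal}

lemma norm_smul_add_one_sub_smul_sq (a : ℝ) (u v : E) :
    ‖a • u + (1 - a) • v‖ ^ 2
      = a * ‖u‖ ^ 2 + (1 - a) * ‖v‖ ^ 2 - a * (1 - a) * ‖u - v‖ ^ 2 := by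
  simp only [← real_inner_self_eq_norm_sq, inner_add_left, inner_add_right, inner_sub_left,
    inner_sub_right, real_inner_smul_left, real_inner_smul_right, real_inner_comm v u]
  ring

lemma IsProx.ne_top {y p z : E} (hp : IsProx τ G y p) (hz : G z ≠ ⊤) : G p ≠ ⊤ := by
  intro htop
  have h := hp z
  rw [htop, EReal.top_add_coe, top_le_iff] at h
  exact EReal.add_ne_top hz (EReal.coe_ne_top _) h

lemma IsProx.three_point (hG : EConvex G) {y p z : E} (hp : IsProx τ G y p) {gp gz : ℝ}
    (hgp : G p = gp) (hgz : G z = gz) :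
    gp + ‖p - y‖ ^ 2 / (2 * τ) + ‖z - p‖ ^ 2 / (2 * τ) ≤ gz + ‖z - y‖ ^ 2 / (2 * τ) := by
  set c := ‖z - p‖ ^ 2 / (2 * τ)
  -- Compare `p` with the points `a • z + (1 - a) • p` of the segment `[p, z]`, then let `a → 0`.
  have hseg : ∀ a ∈ Set.Ioo (0 : ℝ) 1,
      gp + ‖p - y‖ ^ 2 / (2 * τ) + c ≤ gz + ‖z - y‖ ^ 2 / (2 * τ) + a * c := by
    rintro a ⟨ha0, ha1⟩
    have hGa := hG z p a (1 - a) ha0.le (by linarith) (by ring)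
    rw [hgp, hgz, ← EReal.coe_mul, ← EReal.coe_mul, ← EReal.coe_add] at hGa
    have hprox := hp (a • z + (1 - a) • p)
    rw [hgp] at hprox
    have hreal : gp + ‖p - y‖ ^ 2 / (2 * τ)
        ≤ a * gz + (1 - a) * gp + ‖a • (z - y) + (1 - a) • (p - y)‖ ^ 2 / (2 * τ) := by
      rw [show a • (z - y) + (1 - a) • (p - y) = a • z + (1 - a) • p - y by module]
      have h := hprox.trans (add_le_add_left hGa _)
      exact_mod_cast h
    rw [norm_smul_add_one_sub_smul_sq, sub_sub_sub_cancel_right] at hreal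
    have hscaled : a * (gp + ‖p - y‖ ^ 2 / (2 * τ) + c)
        ≤ a * (gz + ‖z - y‖ ^ 2 / (2 * τ) + a * c) := by
      simp only [c]
      ring_nf at hreal ⊢
      linarith
    exact le_of_mul_le_mul_left hscaled ha0
  have hlim : Filter.Tendsto (fun a : ℝ => gz + ‖z - y‖ ^ 2 / (2 * τ) + a * c)
      (nhdsWithin 0 (Set.Ioi 0)) (nhds (gz + ‖z - y‖ ^ 2 / (2 * τ))) := by
    refine tendsto_nhdsWithin_of_tendsto_nhds ?_
    simpa using ((Filter.tendsto_id (x := nhds (0 : ℝ))).mul_const c).const_add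
      (gz + ‖z - y‖ ^ 2 / (2 * τ))
  exact ge_of_tendsto hlim (Filter.eventually_of_mem (Ioo_mem_nhdsGT one_pos) hseg)

lemma exists_real_values_of_isProx_chain (hbot : ∀ z, G z ≠ ⊥) {y ζ : ℕ → E} {m : ℕ}
    (hstep : ∀ j < m, IsProx τ G (y j) (ζ (j + 1))) (h0 : G (ζ 0) ≠ ⊤) :
    ∃ v : ℕ → ℝ, ∀ j ≤ m, G (ζ j) = v j := by
  have hfin : ∀ j ≤ m, G (ζ j) ≠ ⊤ := by
    intro j
    induction j with
    | zero => exact fun _ => h0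
    | succ k ih => exact fun hk => (hstep k (by omega)).ne_top (ih (by omega))
  exact ⟨fun j => (G (ζ j)).toReal, fun j hj => (EReal.coe_toReal (hfin j hj) (hbot _)).symm⟩

end Prox

section ForwardBackward

variable {E : Type*} [NormedAddCommGroup E] [InnerProductSpace ℝ E] [CompleteSpace E]
  {F : E → ℝ} {f : E → E} {L τ : ℝ} {G : E → EReal}

lemma IsProx.forwardBackward_sufficient_decrease (hτ : 0 < τ)
    (hF : ∀ y, HasGradientAt F (f y) y) (hf : ∀ y y', ‖f y - f y'‖ ≤ L * ‖y - y'‖) (hG : EConvex G)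
    {q p : E} (hp : IsProx τ G (q - τ • f q) p) {gq gp : ℝ} (hgq : G q = gq) (hgp : G p = gp) :
    F p + gp + (2 - τ * L) / (2 * τ) * ‖p - q‖ ^ 2 ≤ F q + gq := by
  have hprox := hp.three_point hG hgp hgq
  rw [show p - (q - τ • f q) = (p - q) + τ • f q by abel, show q - (q - τ • f q) = τ • f q by abel,
    norm_sub_rev q p, norm_add_sq_real, real_inner_smul_right, norm_smul,
    Real.norm_of_nonneg hτ.le, mul_pow] at hprox
  have hsmooth := le_add_inner_add_sq_of_lipschitz_gradient hF hf q p
  rw [real_inner_comm] at hsmooth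
  have hsplit : (‖p - q‖ ^ 2 + 2 * (τ * ⟪p - q, f q⟫) + τ ^ 2 * ‖f q‖ ^ 2) / (2 * τ)
      = ‖p - q‖ ^ 2 / (2 * τ) + ⟪p - q, f q⟫ + τ ^ 2 * ‖f q‖ ^ 2 / (2 * τ) := by
    field_simp
  have hcoeff : (2 - τ * L) / (2 * τ) * ‖p - q‖ ^ 2
      = ‖p - q‖ ^ 2 / (2 * τ) + ‖p - q‖ ^ 2 / (2 * τ) - L / 2 * ‖p - q‖ ^ 2 := by
    field_simp
    ring
  linarith

lemma forwardBackward_sum_sufficient_decrease (hτ : 0 < τ)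
    (hF : ∀ y, HasGradientAt F (f y) y) (hf : ∀ y y', ‖f y - f y'‖ ≤ L * ‖y - y'‖) (hG : EConvex G)
    {ζ : ℕ → E} {m : ℕ} (hstep : ∀ j < m, IsProx τ G (ζ j - τ • f (ζ j)) (ζ (j + 1)))
    {v : ℕ → ℝ} (hv : ∀ j ≤ m, G (ζ j) = v j) :
    F (ζ m) + v m + (2 - τ * L) / (2 * τ) * ∑ j ∈ Finset.range m, ‖ζ (j + 1) - ζ j‖ ^ 2
      ≤ F (ζ 0) + v 0 := by
  have hstep_decrease : ∀ j ∈ Finset.range m, (2 - τ * L) / (2 * τ) * ‖ζ (j + 1) - ζ j‖ ^ 2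
      ≤ (F (ζ j) + v j) - (F (ζ (j + 1)) + v (j + 1)) := by
    intro j hj
    rw [Finset.mem_range] at hj
    have h := (hstep j hj).forwardBackward_sufficient_decrease hτ hF hf hG
      (hv j hj.le) (hv (j + 1) hj)
    linarith
  have hsum := Finset.sum_le_sum hstep_decrease
  rw [← Finset.mul_sum, Finset.sum_range_sub' (fun j => F (ζ j) + v j)] at hsum
  linarith

end ForwardBackward

theorem coherent_coarse_correction_descent_direction_general
    {X XH : Type*} [NormedAddCommGroup X] [InnerProductSpace ℝ X]
    [NormedAddCommGroup XH] [InnerProductSpace ℝ XH] [CompleteSpace XH]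
    (Ih : X →L[ℝ] XH) (IH : XH →L[ℝ] X) (μ : ℝ) (hμ : 0 < μ)
    (hadj : ∀ (u : X) (ζ : XH), ⟪Ih u, ζ⟫ = μ * ⟪u, IH ζ⟫)
    (f : X → X) (G : X → EReal) (x : X)
    (FH : XH → ℝ) (fH : XH → XH) (LH τH : ℝ)
    (hFHconv : ConvexOn ℝ Set.univ FH)
    (hgradFH : ∀ ζ, HasGradientAt FH (fH ζ) ζ)
    (hlipFH : ∀ ζ ζ', ‖fH ζ - fH ζ'‖ ≤ LH * ‖ζ - ζ'‖)
    (GH : XH → EReal) (hGH : ProperConvexLsc GH)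
    (hτ : 0 < τH) (hε : 0 < 2 - τH * LH)
    (m : ℕ) (ζ : ℕ → XH)
    (w : XH) (hw : w = Ih (f x) - fH (ζ 0))
    (hstep : ∀ j < m, IsProx τH GH (ζ j - τH • (fH (ζ j) + w)) (ζ (j + 1)))
    (hcoherence : ∀ g ∈ ESubdiff G x, ∀ ζ' : XH,
      GH (ζ 0) + ((⟪Ih g, ζ' - ζ 0⟫ : ℝ) : EReal) ≤ GH ζ')
    (d : X) (hd : d = IH (ζ m - ζ 0)) :
    (∀ g ∈ ESubdiff G x,
      ⟪g + f x, d⟫ ≤ -((2 - τH * LH) / (2 * μ * τH)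
        * ∑ j ∈ Finset.range m, ‖ζ (j + 1) - ζ j‖ ^ 2))
    ∧ -((2 - τH * LH) / (2 * μ * τH)
        * ∑ j ∈ Finset.range m, ‖ζ (j + 1) - ζ j‖ ^ 2) ≤ 0 := by
  set S := ∑ j ∈ Finset.range m, ‖ζ (j + 1) - ζ j‖ ^ 2
  refine ⟨fun g hg => ?_, neg_nonpos.mpr (mul_nonneg (div_nonneg hε.le (by positivity))
    (Finset.sum_nonneg fun _ _ => sq_nonneg _))⟩
  obtain ⟨ζ', hζ'⟩ := hGH.1
  have h0 : GH (ζ 0) ≠ ⊤ := fun htop =>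
    hζ' (top_le_iff.mp (by simpa [htop] using hcoherence g hg ζ'))
  obtain ⟨v, hv⟩ := exists_real_values_of_isProx_chain hGH.2.1 hstep h0
  have hdecrease := forwardBackward_sum_sufficient_decrease (F := fun ζ => FH ζ + ⟪w, ζ⟫) hτ
    (fun ζ => (hgradFH ζ).add_inner_const w) (by simpa using hlipFH) hGH.2.2.1 hstep hv
  have hFH := hFHconv.add_inner_le_of_hasGradientAt (hgradFH (ζ 0)) (ζ m)
  have hGH_subgrad : v 0 + ⟪Ih g, ζ m - ζ 0⟫ ≤ v m := by
    have h := hcoherence g hg (ζ m)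
    rw [hv 0 m.zero_le, hv m le_rfl] at h
    exact_mod_cast h
  have hpair : μ * ⟪g + f x, d⟫
      = ⟪Ih g, ζ m - ζ 0⟫ + ⟪fH (ζ 0), ζ m - ζ 0⟫ + (⟪w, ζ m⟫ - ⟪w, ζ 0⟫) := by
    rw [hd, ← hadj, map_add, ← inner_sub_right, ← inner_add_left, ← inner_add_left, hw]
    congr 1
    abel
  have hcoeff : μ * ((2 - τH * LH) / (2 * μ * τH) * S) = (2 - τH * LH) / (2 * τH) * S := by
    field_simp
  refine le_of_mul_le_mul_left ?_ hμ
  linarith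

/-- under the nonsmooth coherence condition, the prolonged coarse correction
`d = I_H^h(ζ^m − ζ⁰)` satisfies
`sup_{g ∈ ∂G(x)} ⟨g + ∇F(x), d⟩ ≤ −(ε/(2μτ_H)) Σ_j ‖ζ^{j+1} − ζ^j‖² ≤ 0`. -/
theorem coherent_coarse_correction_descent_direction
    {X XH : Type*} [NormedAddCommGroup X] [InnerProductSpace ℝ X] [CompleteSpace X]
    [NormedAddCommGroup XH] [InnerProductSpace ℝ XH] [CompleteSpace XH]
    (Ih : X →L[ℝ] XH) (IH : XH →L[ℝ] X) (μ : ℝ) (hμ : 0 < μ)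
    (hadj : ∀ (u : X) (ζ : XH), ⟪Ih u, ζ⟫ = μ * ⟪u, IH ζ⟫)
    (F : X → ℝ) (f : X → X) (LF : ℝ)
    (hFconv : ConvexOn ℝ Set.univ F)
    (hgradF : ∀ y, HasGradientAt F (f y) y)
    (hlipF : ∀ y y', ‖f y - f y'‖ ≤ LF * ‖y - y'‖)
    (G : X → EReal) (hG : ProperConvexLsc G)
    (x : X) (hx : (ESubdiff G x).Nonempty)
    (FH : XH → ℝ) (fH : XH → XH) (LH τH : ℝ)
    (hFHconv : ConvexOn ℝ Set.univ FH)
    (hgradFH : ∀ ζ, HasGradientAt FH (fH ζ) ζ)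
    (hlipFH : ∀ ζ ζ', ‖fH ζ - fH ζ'‖ ≤ LH * ‖ζ - ζ'‖)
    (GH : XH → EReal) (hGH : ProperConvexLsc GH)
    (hτ : 0 < τH) (hε : 0 < 2 - τH * LH)
    (m : ℕ) (ζ : ℕ → XH)
    (w : XH) (hw : w = Ih (f x) - fH (ζ 0))
    (hstep : ∀ j < m, IsProx τH GH (ζ j - τH • (fH (ζ j) + w)) (ζ (j + 1)))
    (hcoherence : ∀ g ∈ ESubdiff G x, ∀ ζ' : XH,
      GH (ζ 0) + ((⟪Ih g, ζ' - ζ 0⟫ : ℝ) : EReal) ≤ GH ζ')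
    (d : X) (hd : d = IH (ζ m - ζ 0)) :
    (∀ g ∈ ESubdiff G x,
      ⟪g + f x, d⟫ ≤ -((2 - τH * LH) / (2 * μ * τH)
        * ∑ j ∈ Finset.range m, ‖ζ (j + 1) - ζ j‖ ^ 2))
    ∧ -((2 - τH * LH) / (2 * μ * τH)
        * ∑ j ∈ Finset.range m, ‖ζ (j + 1) - ζ j‖ ^ 2) ≤ 0 :=
  coherent_coarse_correction_descent_direction_general Ih IH μ hμ hadj f G x FH fH LH τH hFHconv
    hgradFH hlipFH GH hGH hτ hε m ζ w hw hstep hcoherence d hd
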